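/- arXiv:1308.3036 — 9 statements merged into one kernel-verified Lean document; each statement's English description precedes it below -/
import Mathlib

section
/- A semidirect product of a completely simple semigroup T by a group H is completely simple. -/
/-- Semidirect product multiplication on `T × H`: `(t,A)(u,B) = (t · (A·u), AB)`. -/
def sdMul {T H : Type*} [Mul T] [Mul H] (act : H → T → T) (x y : T × H) : T × H :=
  (x.1 * act x.2 y.1, x.2 * y.2)

/-- A (two-sided) ideal of the semigroup with multiplication `mul`. -/
def IsIdeal {S : Type*} (mul : S → S → S) (I : Set S) : Prop :=
  I.Nonempty ∧ ∀ a ∈ I, ∀ s : S, mul a s ∈ I ∧ mul s a ∈ I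

/-- A semigroup is simple if it has no proper two-sided ideals. -/
def IsSimpleSgr {S : Type*} (mul : S → S → S) : Prop :=
  ∀ I : Set S, IsIdeal mul I → I = Set.univ

/-- A primitive idempotent: an idempotent minimal in the natural order on idempotents. -/
def IsPrimitiveIdem {S : Type*} (mul : S → S → S) (e : S) : Prop :=
  mul e e = e ∧ ∀ f : S, mul f f = f → mul e f = f → mul f e = f → f = e

/-- A semigroup is completely simple if it is simple and has a primitive idempotent. -/
def IsCompletelySimple {S : Type*} (mul : S → S → S) : Prop :=
  IsSimpleSgr mul ∧ ∃ e : S, IsPrimitiveIdem mul e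

/- In a simple semigroup every `u` has the form `x t y`, so every `(u, B)` lies in the ideal
generated by `(t, A)`: `(x, 1) (t, A) (A⁻¹ • y, A⁻¹ B) = (x t y, B)`. A primitive idempotent `e` of `T`
gives the primitive idempotent `(e, 1)`, because an idempotent `(f, A)` forces `A = 1`. -/

theorem IsSimpleSgr.exists_mul_mul_eq {S : Type*} [Semigroup S]
    (hS : IsSimpleSgr (fun a b : S => a * b)) (t u : S) : ∃ x y, x * t * y = u := by
  have hideal : IsIdeal (fun a b : S => a * b) {u | ∃ x y, x * t * y = u} := by
    refine ⟨⟨t * t * t, t, t, rfl⟩, ?_⟩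
    rintro _ ⟨x, y, rfl⟩ s
    exact ⟨⟨x, y * s, by simp only [mul_assoc]⟩, ⟨s * x, y, by simp only [mul_assoc]⟩⟩
  exact Set.eq_univ_iff_forall.mp (hS _ hideal) u

section SemidirectProduct

variable {T H : Type*} {act : H → T → T}

theorem act_act_inv [Group H] (h_one : ∀ t : T, act 1 t = t)
    (h_comp : ∀ (A B : H) (t : T), act (B * A) t = act B (act A t)) (A : H) (t : T) :
    act A (act A⁻¹ t) = t := by
  rw [← h_comp, mul_inv_cancel, h_one]

theorem isSimpleSgr_sdMul [Semigroup T] [Group H] (h_one : ∀ t : T, act 1 t = t)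
    (h_comp : ∀ (A B : H) (t : T), act (B * A) t = act B (act A t))
    (hT : IsSimpleSgr (fun a b : T => a * b)) : IsSimpleSgr (sdMul act) := by
  rintro I ⟨⟨⟨t, A⟩, htA⟩, hI⟩
  refine Set.eq_univ_of_forall fun ⟨u, B⟩ => ?_
  obtain ⟨x, y, rfl⟩ := hT.exists_mul_mul_eq t u
  have hmem := (hI _ (hI _ htA (x, 1)).2 (act A⁻¹ y, A⁻¹ * B)).1
  simpa only [sdMul, h_one, one_mul, act_act_inv h_one h_comp, mul_inv_cancel_left] using hmem

theorem IsPrimitiveIdem.sdMul_one [Mul T] [Group H] (h_one : ∀ t : T, act 1 t = t) {e : T}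
    (he : IsPrimitiveIdem (fun a b : T => a * b) e) : IsPrimitiveIdem (sdMul act) (e, 1) := by
  refine ⟨by simp only [sdMul, h_one, he.1, mul_one], ?_⟩
  rintro ⟨f, A⟩ hff hef hfe
  simp only [sdMul, h_one, Prod.mk.injEq] at hff hef hfe
  obtain rfl : A = 1 := mul_eq_left.mp hff.2
  rw [h_one] at hff hfe
  rw [he.2 f hff.1 hef.1 hfe.1]

end SemidirectProduct

theorem stmt_3_general {T H : Type*} [Semigroup T] [Group H] (act : H → T → T)
    (h_one : ∀ t : T, act 1 t = t)
    (h_comp : ∀ (A B : H) (t : T), act (B * A) t = act B (act A t))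
    (hT : IsCompletelySimple (fun a b : T => a * b)) :
    IsCompletelySimple (sdMul act) := by
  obtain ⟨hsimple, e, he⟩ := hT
  exact ⟨isSimpleSgr_sdMul h_one h_comp hsimple, (e, 1), he.sdMul_one h_one⟩

/-- A semidirect product of a completely simple semigroup by a group is completely simple. -/
theorem stmt_3 {T H : Type*} [Semigroup T] [Group H] (act : H → T → T)
    (h_one : ∀ t : T, act 1 t = t)
    (h_comp : ∀ (A B : H) (t : T), act (B * A) t = act B (act A t))
    (h_mul : ∀ (A : H) (t u : T), act A (t * u) = act A t * act A u)
    (hT : IsCompletelySimple (fun a b : T => a * b)) :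
    IsCompletelySimple (sdMul act) :=
  stmt_3_general act h_one h_comp hT
end

section
/- Let T ⋊ H be a semidirect product of a regular semigroup T by a group H. Then for any elements (t,A), (u,B) of T ⋊ H: (t,A) R (u,B) in T ⋊ H if and only if t R u in T, where R denotes Green's R-relation. -/
/-- The principal right ideal `x ∪ xS` generated by `x`. -/
def rIdeal {S : Type*} (mul : S → S → S) (x : S) : Set S :=
  insert x {y | ∃ s : S, y = mul x s}

/-- Green's relation `R`: `x R y` iff `x ∪ xS = y ∪ yS`. -/
def greenR {S : Type*} (mul : S → S → S) (x y : S) : Prop :=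
  rIdeal mul x = rIdeal mul y

/-!
A right multiple of `(t, A)` has as first coordinate a right multiple of `t`. Conversely,
`(t, A) (A⁻¹ · s, A⁻¹ B) = (t * s, B)`, so the group coordinate of a right multiple can be
prescribed freely; and in a regular semigroup `t = t * (t' * t)` is itself a right multiple of `t`,
so every element of `t ∪ tT` lies in `tT`.
-/

section RightIdeal

variable {S : Type*} (mul : S → S → S)

theorem mem_rIdeal_self (x : S) : x ∈ rIdeal mul x :=
  Set.mem_insert x _

theorem rIdeal_subset_of_mem [Std.Associative mul] {x y : S} (h : y ∈ rIdeal mul x) :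
    rIdeal mul y ⊆ rIdeal mul x := by
  rcases h with rfl | ⟨s, rfl⟩
  · exact le_rfl
  · rintro z (rfl | ⟨r, rfl⟩)
    · exact Or.inr ⟨s, rfl⟩
    · exact Or.inr ⟨mul s r, Std.Associative.assoc x s r⟩

theorem greenR_iff_mem_rIdeal [Std.Associative mul] {x y : S} :
    greenR mul x y ↔ y ∈ rIdeal mul x ∧ x ∈ rIdeal mul y := by
  constructor
  · intro h
    exact ⟨h ▸ mem_rIdeal_self mul y, h ▸ mem_rIdeal_self mul x⟩
  · rintro ⟨hy, hx⟩
    exact (rIdeal_subset_of_mem mul hx).antisymm (rIdeal_subset_of_mem mul hy)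

end RightIdeal

theorem exists_eq_mul_of_mem_rIdeal {T : Type*} [Semigroup T] {t u t' : T}
    (ht : t * t' * t = t) (hu : u ∈ rIdeal (· * ·) t) : ∃ s, u = t * s := by
  rcases hu with rfl | hu
  · exact ⟨t' * u, by rw [← mul_assoc, ht]⟩
  · exact hu

section SemidirectProduct

variable {T H : Type*} [Semigroup T] [Group H] {act : H → T → T}

theorem sdMul_associative (h_comp : ∀ (A B : H) (t : T), act (B * A) t = act B (act A t))
    (h_mul : ∀ (A : H) (t u : T), act A (t * u) = act A t * act A u) :
    Std.Associative (sdMul act) where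
  assoc x y z := by simp only [sdMul, mul_assoc, h_mul, h_comp]

theorem fst_mem_rIdeal_of_mem_rIdeal_sdMul {x y : T × H} (h : y ∈ rIdeal (sdMul act) x) :
    y.1 ∈ rIdeal (· * ·) x.1 := by
  rcases h with rfl | ⟨s, rfl⟩
  · exact mem_rIdeal_self _ _
  · exact Or.inr ⟨act x.2 s.1, rfl⟩

theorem mk_mul_mem_rIdeal_sdMul (h_one : ∀ t : T, act 1 t = t)
    (h_comp : ∀ (A B : H) (t : T), act (B * A) t = act B (act A t)) (t s : T) (A B : H) :
    (t * s, B) ∈ rIdeal (sdMul act) (t, A) := by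
  refine Or.inr ⟨(act A⁻¹ s, A⁻¹ * B), ?_⟩
  simp only [sdMul, ← h_comp, mul_inv_cancel, h_one, mul_inv_cancel_left]

end SemidirectProduct

/-- In a semidirect product of a regular semigroup `T` by a group `H`,
`(t,A) R (u,B)` holds if and only if `t R u` holds in `T`. -/
theorem stmt_4 {T H : Type*} [Semigroup T] [Group H] (act : H → T → T)
    (h_one : ∀ t : T, act 1 t = t)
    (h_comp : ∀ (A B : H) (t : T), act (B * A) t = act B (act A t))
    (h_mul : ∀ (A : H) (t u : T), act A (t * u) = act A t * act A u)
    (hreg : ∀ t : T, ∃ t' : T, t * t' * t = t)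
    (t u : T) (A B : H) :
    greenR (sdMul act) (t, A) (u, B) ↔ greenR (fun a b : T => a * b) t u := by
  have : Std.Associative (sdMul act) := sdMul_associative h_comp h_mul
  have lift {t u : T} (A B : H) (h : u ∈ rIdeal (· * ·) t) :
      (u, B) ∈ rIdeal (sdMul act) (t, A) := by
    obtain ⟨t', ht⟩ := hreg t
    obtain ⟨s, rfl⟩ := exists_eq_mul_of_mem_rIdeal ht h
    exact mk_mul_mem_rIdeal_sdMul h_one h_comp t s A B
  rw [greenR_iff_mem_rIdeal, greenR_iff_mem_rIdeal]
  exact and_congr ⟨fst_mem_rIdeal_of_mem_rIdeal_sdMul, lift A B⟩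
    ⟨fst_mem_rIdeal_of_mem_rIdeal_sdMul, lift B A⟩
end

section
/- Let T ⋊ H be a semidirect product of a regular semigroup T by a group H. Then for any elements (t,A), (u,B) of T ⋊ H: (t,A) L (u,B) in T ⋊ H if and only if A⁻¹·t is L-related to B⁻¹·u in T, where L denotes Green's L-relation. -/
/-- The principal left ideal `x ∪ Sx` generated by `x`. -/
def lIdeal {S : Type*} (mul : S → S → S) (x : S) : Set S :=
  insert x {y | ∃ s : S, y = mul s x}

/-- Green's relation `L`: `x L y` iff `x ∪ Sx = y ∪ Sy`. -/
def greenL {S : Type*} (mul : S → S → S) (x y : S) : Prop :=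
  lIdeal mul x = lIdeal mul y

/-! In a regular semigroup every element lies in its own left ideal `Sx`, so `x L y` just says
that each of `x`, `y` is a left multiple of the other. In `T ⋊ H` the equation
`(v, C) = (s, E)(w, D)` forces `E = C D⁻¹`, and applying `C⁻¹` turns it into
`C⁻¹·v = (C⁻¹·s)(D⁻¹·w)` in `T`; conversely any such factorisation in `T` lifts back. -/

section GreenL

variable {S : Type*} {mul : S → S → S}

theorem lIdeal_subset_iff (assoc : ∀ a b c, mul (mul a b) c = mul a (mul b c)) {x y : S} :
    lIdeal mul x ⊆ lIdeal mul y ↔ x ∈ lIdeal mul y := by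
  refine ⟨fun h => h (Set.mem_insert x _), fun hx z hz => ?_⟩
  rcases hz with rfl | ⟨r, rfl⟩
  · exact hx
  · rcases hx with rfl | ⟨s, rfl⟩
    · exact Or.inr ⟨r, rfl⟩
    · exact Or.inr ⟨mul r s, (assoc r s y).symm⟩

theorem greenL_iff_mem_lIdeal (assoc : ∀ a b c, mul (mul a b) c = mul a (mul b c)) {x y : S} :
    greenL mul x y ↔ x ∈ lIdeal mul y ∧ y ∈ lIdeal mul x := by
  rw [greenL, Set.Subset.antisymm_iff, lIdeal_subset_iff assoc, lIdeal_subset_iff assoc]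

theorem mem_lIdeal_iff_of_exists_eq_mul {x y : S} (hy : ∃ s, y = mul s y) :
    x ∈ lIdeal mul y ↔ ∃ s, x = mul s y := by
  refine ⟨?_, Or.inr⟩
  rintro (rfl | hx)
  exacts [hy, hx]

end GreenL

theorem exists_eq_mul_self_of_regular {T : Type*} [Semigroup T]
    (hreg : ∀ t : T, ∃ t' : T, t * t' * t = t) (v : T) : ∃ s, v = s * v := by
  obtain ⟨v', hv'⟩ := hreg v
  exact ⟨v * v', hv'.symm⟩

section SemidirectProduct

variable {T H : Type*} [Semigroup T] [Group H] {act : H → T → T}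
  (h_one : ∀ t : T, act 1 t = t)
  (h_comp : ∀ (A B : H) (t : T), act (B * A) t = act B (act A t))
  (h_mul : ∀ (A : H) (t u : T), act A (t * u) = act A t * act A u)

include h_comp h_mul in
theorem sdMul_assoc (x y z : T × H) :
    sdMul act (sdMul act x y) z = sdMul act x (sdMul act y z) := by
  simp only [sdMul, h_mul, h_comp, mul_assoc]

include h_one in
theorem exists_sdMul_eq_self_of_regular (hreg : ∀ t : T, ∃ t' : T, t * t' * t = t)
    (x : T × H) : ∃ s, x = sdMul act s x := by
  obtain ⟨v', hv'⟩ := hreg x.1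
  exact ⟨(x.1 * v', 1), by simp only [sdMul, h_one, one_mul, hv']⟩

include h_one h_comp h_mul in
theorem exists_eq_sdMul_iff (v w : T) (C D : H) :
    (∃ s, (v, C) = sdMul act s (w, D)) ↔ ∃ s, act C⁻¹ v = s * act D⁻¹ w := by
  constructor
  · rintro ⟨⟨s, E⟩, hs⟩
    obtain ⟨rfl, rfl⟩ := Prod.mk.inj hs
    refine ⟨act (E * D)⁻¹ s, ?_⟩
    rw [h_mul, ← h_comp]
    congr 2
    group
  · rintro ⟨s, hs⟩
    refine ⟨(act C s, C * D⁻¹), ?_⟩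
    have hv : v = act C (act C⁻¹ v) := by rw [← h_comp, mul_inv_cancel, h_one]
    simp only [sdMul, Prod.mk.injEq, inv_mul_cancel_right, and_true]
    rw [hv, hs, h_mul, h_comp]

end SemidirectProduct

/-- In a semidirect product of a regular semigroup `T` by a group `H`,
`(t,A) L (u,B)` holds if and only if `A⁻¹·t L B⁻¹·u` holds in `T`. -/
theorem stmt_5 {T H : Type*} [Semigroup T] [Group H] (act : H → T → T)
    (h_one : ∀ t : T, act 1 t = t)
    (h_comp : ∀ (A B : H) (t : T), act (B * A) t = act B (act A t))
    (h_mul : ∀ (A : H) (t u : T), act A (t * u) = act A t * act A u)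
    (hreg : ∀ t : T, ∃ t' : T, t * t' * t = t)
    (t u : T) (A B : H) :
    greenL (sdMul act) (t, A) (u, B) ↔
      greenL (fun a b : T => a * b) (act A⁻¹ t) (act B⁻¹ u) := by
  have sdReg := exists_sdMul_eq_self_of_regular (H := H) h_one hreg
  have tReg := exists_eq_mul_self_of_regular hreg
  rw [greenL_iff_mem_lIdeal (sdMul_assoc h_comp h_mul),
    greenL_iff_mem_lIdeal (mul := fun a b : T => a * b) mul_assoc,
    mem_lIdeal_iff_of_exists_eq_mul (sdReg _), mem_lIdeal_iff_of_exists_eq_mul (sdReg _),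
    mem_lIdeal_iff_of_exists_eq_mul (tReg _), mem_lIdeal_iff_of_exists_eq_mul (tReg _),
    exists_eq_sdMul_iff h_one h_comp h_mul, exists_eq_sdMul_iff h_one h_comp h_mul]
end

section
/- Let S = M[G; I, Λ; P] be a Rees matrix semigroup over a group G with normalized sandwich matrix P. Then every group congruence ρ on S arises from a normal subgroup N of G containing all entries of P, via (i,g,λ) ρ (j,h,μ) if and only if gh⁻¹ ∈ N. -/
/-- Rees matrix semigroup multiplication on `I × G × Λ` with sandwich matrix `P`. -/
def reesMul {G I L : Type*} [Mul G] (P : L → I → G) (x y : I × G × L) : I × G × L :=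
  (x.1, x.2.1 * P x.2.2 y.1 * y.2.1, y.2.2)

/-!
Since `p_{λ₁ i₁} = 1`, the element `e = (i₁, 1, λ₁)` is idempotent, so `φ e = 1` in the group `K`.
Multiplying by `e` on either side and using the normalization of the first row and column shows
that `φ (i, g, λ)` only depends on `g`, and `g ↦ φ (i₁, g, λ₁)` is a homomorphism `ψ : G →* K`.
Its kernel is the required `N`: the entry `p_{λ i}` is the middle coordinate of
`(i₁, 1, λ)(i, 1, λ₁)`, and both factors are mapped to `1`.
-/

namespace ReesMatrix

variable {G I L K : Type*} [Group G] [Group K] {P : L → I → G} {φ : I × G × L → K}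
  {i0 : I} {l0 : L}

theorem map_idempotent_eq_one (hhom : ∀ x y, φ (reesMul P x y) = φ x * φ y)
    (h00 : P l0 i0 = 1) : φ (i0, 1, l0) = 1 := by
  have h := hhom (i0, 1, l0) (i0, 1, l0)
  simp only [reesMul, h00, mul_one] at h
  exact mul_eq_left.mp h.symm

theorem map_mul_middle (hhom : ∀ x y, φ (reesMul P x y) = φ x * φ y)
    (h00 : P l0 i0 = 1) (g h : G) :
    φ (i0, g * h, l0) = φ (i0, g, l0) * φ (i0, h, l0) := by
  simpa only [reesMul, h00, mul_one] using hhom (i0, g, l0) (i0, h, l0)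

def middleHom (hhom : ∀ x y, φ (reesMul P x y) = φ x * φ y) (h00 : P l0 i0 = 1) : G →* K where
  toFun g := φ (i0, g, l0)
  map_one' := map_idempotent_eq_one hhom h00
  map_mul' := map_mul_middle hhom h00

theorem map_eq_middleHom (hhom : ∀ x y, φ (reesMul P x y) = φ x * φ y)
    (hrow : ∀ i, P l0 i = 1) (hcol : ∀ l, P l i0 = 1) (x : I × G × L) :
    φ x = middleHom hhom (hrow i0) x.2.1 := by
  obtain ⟨i, g, l⟩ := x
  have he := map_idempotent_eq_one hhom (hrow i0)
  have hleft := hhom (i0, 1, l0) (i, g, l)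
  have hright := hhom (i0, g, l) (i0, 1, l0)
  simp only [reesMul, hrow, hcol, he, one_mul, mul_one] at hleft hright
  rw [← hleft, ← hright]
  rfl

theorem sandwich_mem_ker_middleHom (hhom : ∀ x y, φ (reesMul P x y) = φ x * φ y)
    (hrow : ∀ i, P l0 i = 1) (hcol : ∀ l, P l i0 = 1) (l : L) (i : I) :
    P l i ∈ (middleHom hhom (hrow i0)).ker := by
  have h := hhom (i0, 1, l) (i, 1, l0)
  simp only [reesMul, one_mul, mul_one] at h
  rw [MonoidHom.mem_ker, ← map_eq_middleHom hhom hrow hcol (i0, P l i, l0), h,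
    map_eq_middleHom hhom hrow hcol, map_eq_middleHom hhom hrow hcol, map_one, mul_one]

end ReesMatrix

open ReesMatrix in
theorem stmt_7_general {G I L K : Type*} [Group G] [Group K] (P : L → I → G) (i0 : I) (l0 : L)
    (hnorm : (∀ i : I, P l0 i = 1) ∧ (∀ l : L, P l i0 = 1))
    (φ : I × G × L → K)
    (hhom : ∀ x y : I × G × L, φ (reesMul P x y) = φ x * φ y) :
    ∃ N : Subgroup G, N.Normal ∧ (∀ (l : L) (i : I), P l i ∈ N) ∧
      ∀ x y : I × G × L, φ x = φ y ↔ x.2.1 * y.2.1⁻¹ ∈ N := by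
  obtain ⟨hrow, hcol⟩ := hnorm
  refine ⟨(middleHom hhom (hrow i0)).ker, inferInstance,
    sandwich_mem_ker_middleHom hhom hrow hcol, fun x y => ?_⟩
  rw [map_eq_middleHom hhom hrow hcol x, map_eq_middleHom hhom hrow hcol y,
    MonoidHom.mem_ker, map_mul, map_inv, mul_inv_eq_one]

/-- Every group congruence on a Rees matrix semigroup `S = M[G;I,Λ;P]` with `P`
normalized arises from a normal subgroup `N` of `G` containing all entries of `P`,
via `(i,g,λ) ρ (j,h,μ) ↔ g h⁻¹ ∈ N`.  (A group congruence is presented here by a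
surjective multiplicative map `φ` of `S` onto a group `K`; `ρ` is its kernel.) -/
theorem stmt_7 {G I L K : Type*} [Group G] [Group K] (P : L → I → G) (i0 : I) (l0 : L)
    (hnorm : (∀ i : I, P l0 i = 1) ∧ (∀ l : L, P l i0 = 1))
    (φ : I × G × L → K)
    (hsurj : Function.Surjective φ)
    (hhom : ∀ x y : I × G × L, φ (reesMul P x y) = φ x * φ y) :
    ∃ N : Subgroup G, N.Normal ∧ (∀ (l : L) (i : I), P l i ∈ N) ∧
      ∀ x y : I × G × L, φ x = φ y ↔ x.2.1 * y.2.1⁻¹ ∈ N :=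
  stmt_7_general P i0 l0 hnorm φ hhom
end

section
/- The kernel of any group congruence on a completely simple semigroup is a completely simple subsemigroup. -/
/-- A (two-sided) ideal of the subsemigroup `K` of the semigroup with multiplication `mul`. -/
def IsIdealOn {S : Type*} (mul : S → S → S) (K I : Set S) : Prop :=
  I ⊆ K ∧ I.Nonempty ∧ ∀ a ∈ I, ∀ s ∈ K, mul a s ∈ I ∧ mul s a ∈ I

/-- The subsemigroup `K` is simple: it has no proper two-sided ideals. -/
def IsSimpleOn {S : Type*} (mul : S → S → S) (K : Set S) : Prop :=
  ∀ I : Set S, IsIdealOn mul K I → I = K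

/-- `e` is a primitive idempotent of the subsemigroup `K`. -/
def IsPrimitiveIdemOn {S : Type*} (mul : S → S → S) (K : Set S) (e : S) : Prop :=
  e ∈ K ∧ mul e e = e ∧
    ∀ f ∈ K, mul f f = f → mul e f = f → mul f e = f → f = e

/-- The subset `K` is a completely simple subsemigroup: closed under multiplication,
simple, and possessing a primitive idempotent. -/
def IsCompletelySimpleOn {S : Type*} (mul : S → S → S) (K : Set S) : Prop :=
  (∀ a ∈ K, ∀ b ∈ K, mul a b ∈ K) ∧ IsSimpleOn mul K ∧
    ∃ e : S, IsPrimitiveIdemOn mul K e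

/-!
Let `e` be a primitive idempotent of the completely simple semigroup `S` and `N = φ⁻¹(1)`.
Primitivity makes the corner `eSe` a group: from a factorisation `p z q = e` inside `eSe`
one builds idempotents of `eSe` that must equal `e`. Since `φ` maps `eSe` onto `K`, every
factorisation `b = s a t` in `S` of elements `a, b ∈ N` can be corrected by inverses in `eSe`
to one with `s, t ∈ N`, and such factorisations are exactly what makes `N` simple.
-/

open Set Subsemigroup

section

variable {S : Type*} [Semigroup S]

theorem IsSimpleOn.exists_mul_mul_eq (h : IsSimpleOn (· * ·) (univ : Set S)) (x y : S) :
    ∃ s t : S, s * x * t = y := by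
  have hideal : IsIdealOn (· * ·) univ {z : S | ∃ s t, s * x * t = z} := by
    refine ⟨subset_univ _, ⟨x * x * x, x, x, rfl⟩, ?_⟩
    rintro _ ⟨s, t, rfl⟩ u -
    exact ⟨⟨s, t * u, by simp only [mul_assoc]⟩, ⟨u * s, t, by simp only [mul_assoc]⟩⟩
  have hy : y ∈ {z : S | ∃ s t, s * x * t = z} := (h _ hideal).symm ▸ mem_univ y
  exact hy

theorem isSimpleOn_of_forall_exists_mul_mul_eq {T : Set S}
    (h : ∀ a ∈ T, ∀ b ∈ T, ∃ s ∈ T, ∃ t ∈ T, s * a * t = b) : IsSimpleOn (· * ·) T := by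
  rintro I ⟨hIT, ⟨a, ha⟩, hI⟩
  refine subset_antisymm hIT fun b hb => ?_
  obtain ⟨s, hs, t, ht, rfl⟩ := h a (hIT ha) b hb
  exact (hI _ (hI a ha s hs).2 t ht).1

theorem IsPrimitiveIdemOn.mono {T U : Set S} {e : S} (he : IsPrimitiveIdemOn (· * ·) U e)
    (hTU : T ⊆ U) (heT : e ∈ T) : IsPrimitiveIdemOn (· * ·) T e :=
  ⟨heT, he.2.1, fun f hf => he.2.2 f (hTU hf)⟩

section Corner

variable {e : S} (he : IsPrimitiveIdemOn (· * ·) (univ : Set S) e)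
include he

theorem IsPrimitiveIdemOn.isIdempotentElem : IsIdempotentElem e := he.2.1

theorem IsPrimitiveIdemOn.eq_of_mem_corner {f : S} (hf : f ∈ corner e)
    (hff : IsIdempotentElem f) : f = e :=
  let hf' := (mem_corner_iff he.isIdempotentElem).mp hf
  he.2.2 f (mem_univ f) hff hf'.1 hf'.2

theorem IsPrimitiveIdemOn.mul_eq_and_mul_eq_of_mul_mul_eq {p z q : S}
    (hp : p ∈ corner e) (hz : z ∈ corner e) (hq : q ∈ corner e) (h : p * z * q = e) :
    z * (q * p) = e ∧ q * p * z = e := by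
  have hidem := he.isIdempotentElem
  obtain ⟨hep, hpe⟩ := (mem_corner_iff hidem).mp hp
  obtain ⟨hez, hze⟩ := (mem_corner_iff hidem).mp hz
  obtain ⟨heq, hqe⟩ := (mem_corner_iff hidem).mp hq
  constructor
  · refine he.eq_of_mem_corner ((mem_corner_iff hidem).mpr ⟨?_, ?_⟩) ?_
    · rw [← mul_assoc, hez]
    · rw [mul_assoc, mul_assoc, hpe]
    · calc z * (q * p) * (z * (q * p)) = z * q * (p * z * q) * p := by simp only [mul_assoc]
        _ = z * (q * p) := by rw [h, mul_assoc (z * q), hep, mul_assoc]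
  · refine he.eq_of_mem_corner ((mem_corner_iff hidem).mpr ⟨?_, ?_⟩) ?_
    · rw [← mul_assoc, ← mul_assoc, heq]
    · rw [mul_assoc, hze]
    · calc q * p * z * (q * p * z) = q * (p * z * q) * (p * z) := by simp only [mul_assoc]
        _ = q * p * z := by rw [h, mul_assoc q, ← mul_assoc e, hep, mul_assoc]

theorem IsPrimitiveIdemOn.exists_inverse_of_mem_corner (hS : IsSimpleOn (· * ·) (univ : Set S))
    {z : S} (hz : z ∈ corner e) : ∃ y ∈ corner e, z * y = e ∧ y * z = e := by
  obtain ⟨p, q, hpq⟩ := hS.exists_mul_mul_eq z e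
  have hez : e * z * e = z := by
    obtain ⟨hez, hze⟩ := (mem_corner_iff he.isIdempotentElem).mp hz
    rw [hez, hze]
  have h : e * p * e * z * (e * q * e) = e := by
    calc e * p * e * z * (e * q * e) = e * (p * (e * z * e) * q) * e := by simp only [mul_assoc]
      _ = e := by rw [hez, hpq, he.isIdempotentElem.eq, he.isIdempotentElem.eq]
  exact ⟨_, (corner e).mul_mem ⟨q, rfl⟩ ⟨p, rfl⟩,
    he.mul_eq_and_mul_eq_of_mul_mul_eq ⟨p, rfl⟩ hz ⟨q, rfl⟩ h⟩

end Corner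

section Kernel

variable {K : Type*} [Group K] (φ : S →ₙ* K)

theorem MulHom.map_eq_one_of_isIdempotentElem {e : S} (he : IsIdempotentElem e) : φ e = 1 :=
  IsIdempotentElem.iff_eq_one.mp (he.map φ)

theorem MulHom.mul_mem_ker {a b : S} (ha : φ a = 1) (hb : φ b = 1) : φ (a * b) = 1 := by
  rw [map_mul, ha, hb, one_mul]

variable {φ} (hφ : Function.Surjective φ) (hS : IsSimpleOn (· * ·) (univ : Set S)) {e : S}
  (he : IsPrimitiveIdemOn (· * ·) (univ : Set S) e)
include hφ hS he

/- Writing `b = u * e * v`, pick `z ∈ eSe` with `φ z = φ u` and its inverse `w` in `eSe`;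
then `b = (u * w) * e * (z * v)`. -/
theorem exists_mem_ker_mul_idem_mul_eq {b : S} (hb : φ b = 1) :
    ∃ s, φ s = 1 ∧ ∃ t, φ t = 1 ∧ s * e * t = b := by
  have hφe := φ.map_eq_one_of_isIdempotentElem he.isIdempotentElem
  obtain ⟨u, v, rfl⟩ := hS.exists_mul_mul_eq e b
  obtain ⟨x, hx⟩ := hφ (φ u)
  have hz : e * x * e ∈ corner e := ⟨x, rfl⟩
  obtain ⟨w, hw, hzw, hwz⟩ := he.exists_inverse_of_mem_corner hS hz
  have hφz : φ (e * x * e) = φ u := by rw [map_mul, map_mul, hφe, hx, one_mul, mul_one]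
  have hφw : φ w = (φ u)⁻¹ := by
    rw [← hφz]
    exact eq_inv_of_mul_eq_one_right (by rw [← map_mul, hzw, hφe])
  refine ⟨u * w, by rw [map_mul, hφw, mul_inv_cancel], e * x * e * v, ?_, ?_⟩
  · rw [map_mul, hφz, ← hb, map_mul, map_mul, hφe, mul_one]
  · rw [mul_assoc u, ((mem_corner_iff he.isIdempotentElem).mp hw).2, ← mul_assoc,
      mul_assoc u, hwz]

theorem exists_mem_ker_mul_mul_eq {a b : S} (ha : φ a = 1) (hb : φ b = 1) :
    ∃ s, φ s = 1 ∧ ∃ t, φ t = 1 ∧ s * a * t = b := by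
  have hφe := φ.map_eq_one_of_isIdempotentElem he.isIdempotentElem
  obtain ⟨y, hy, hzy, hyz⟩ := he.exists_inverse_of_mem_corner hS (z := e * a * e) ⟨a, rfl⟩
  have hφy : φ y = 1 := by
    simpa [map_mul, hφe, ha] using congrArg φ hzy
  have hyae : y * a * e = e := by
    calc y * a * e = y * e * a * e := by rw [((mem_corner_iff he.isIdempotentElem).mp hy).2]
      _ = y * (e * a * e) := by simp only [mul_assoc]
      _ = e := hyz
  obtain ⟨s, hs, t, ht, rfl⟩ := exists_mem_ker_mul_idem_mul_eq hφ hS he hb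
  refine ⟨s * y, φ.mul_mem_ker hs hφy, e * t, φ.mul_mem_ker hφe ht, ?_⟩
  calc s * y * a * (e * t) = s * (y * a * e) * t := by simp only [mul_assoc]
    _ = s * e * t := by rw [hyae]

end Kernel

end

/-- The kernel of any group congruence on a completely simple semigroup is a
completely simple subsemigroup.  (The group congruence is presented by a surjective
multiplicative map `φ` of `S` onto a group `K`; its kernel is `{x | φ x = 1}`.) -/
theorem stmt_8 {S K : Type*} [Semigroup S] [Group K]
    (hS : IsCompletelySimpleOn (fun a b : S => a * b) Set.univ)
    (φ : S → K) (hsurj : Function.Surjective φ)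
    (hhom : ∀ x y : S, φ (x * y) = φ x * φ y) :
    IsCompletelySimpleOn (fun a b : S => a * b) {x : S | φ x = 1} := by
  obtain ⟨-, hsimple, e, he⟩ := hS
  let ψ : S →ₙ* K := ⟨φ, hhom⟩
  refine ⟨fun a ha b hb => ψ.mul_mem_ker ha hb, ?_,
    e, he.mono (subset_univ _) (ψ.map_eq_one_of_isIdempotentElem he.isIdempotentElem)⟩
  exact isSimpleOn_of_forall_exists_mul_mul_eq fun a ha b hb =>
    exists_mem_ker_mul_mul_eq (φ := ψ) hsurj hsimple he ha hb
end

section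
/- Let S be a regular semigroup and ρ a group congruence on S such that Ker ρ is a completely simple subsemigroup of S. Then S is completely simple. -/
/-!
In a regular semigroup every element `x` satisfies `x = (x x') x` with `x x'` in the kernel of the
group congruence, since `φ (x x') φ x = φ x` forces `φ (x x') = 1`. Hence an ideal `I` of `S` meets
the kernel, `I ∩ ker` is an ideal of the simple kernel, so `ker ⊆ I` and then `I = S`. Every
idempotent of `S` lies in the kernel, so a primitive idempotent of the kernel is primitive in `S`.
-/

namespace MulHom

variable {S G : Type*} [Semigroup S] [RightCancelMonoid G]

theorem map_mul_eq_one_of_mul_mul_eq_self (f : S →ₙ* G) {x y : S}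
    (h : x * y * x = x) : f (x * y) = 1 :=
  mul_right_cancel (b := f x) <| by rw [← map_mul, h, one_mul]

theorem map_eq_one_of_mul_self (f : S →ₙ* G) {e : S} (he : e * e = e) :
    f e = 1 := by
  simpa only [he] using f.map_mul_eq_one_of_mul_mul_eq_self (x := e) (y := e) (by rw [he, he])

theorem isIdealOn_inter_ker (f : S →ₙ* G)
    (hreg : ∀ x : S, ∃ x' : S, x * x' * x = x) {I : Set S}
    (hI : IsIdealOn (· * ·) Set.univ I) :
    IsIdealOn (· * ·) {x | f x = 1} (I ∩ {x | f x = 1}) := by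
  obtain ⟨-, ⟨a, haI⟩, hIabs⟩ := hI
  obtain ⟨a', ha'⟩ := hreg a
  refine ⟨Set.inter_subset_right, ⟨a * a', (hIabs a haI a' trivial).1,
    f.map_mul_eq_one_of_mul_mul_eq_self ha'⟩, ?_⟩
  rintro b ⟨hbI, hb : f b = 1⟩ s (hs : f s = 1)
  exact ⟨⟨(hIabs b hbI s trivial).1, by rw [Set.mem_ofPred_eq, map_mul, hb, hs, one_mul]⟩,
    ⟨(hIabs b hbI s trivial).2, by rw [Set.mem_ofPred_eq, map_mul, hb, hs, one_mul]⟩⟩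

theorem isSimpleOn_univ_of_ker (f : S →ₙ* G)
    (hreg : ∀ x : S, ∃ x' : S, x * x' * x = x) (hker : IsSimpleOn (· * ·) {x | f x = 1}) :
    IsSimpleOn (· * ·) (Set.univ : Set S) := by
  intro I hI
  have hkerI : {x | f x = 1} ⊆ I := by
    rw [← hker _ (f.isIdealOn_inter_ker hreg hI)]
    exact Set.inter_subset_left
  refine Set.eq_univ_of_forall fun s => ?_
  obtain ⟨s', hs'⟩ := hreg s
  simpa only [hs'] using
    (hI.2.2 _ (hkerI (f.map_mul_eq_one_of_mul_mul_eq_self hs')) s trivial).1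

theorem isPrimitiveIdemOn_univ_of_ker (f : S →ₙ* G) {e : S}
    (he : IsPrimitiveIdemOn (· * ·) {x | f x = 1} e) :
    IsPrimitiveIdemOn (· * ·) Set.univ e := by
  obtain ⟨-, hee, hprim⟩ := he
  exact ⟨trivial, hee, fun g _ hgg => hprim g (f.map_eq_one_of_mul_self hgg) hgg⟩

end MulHom

theorem stmt_9_general {S K : Type*} [Semigroup S] [Group K]
    (hreg : ∀ x : S, ∃ x' : S, x * x' * x = x)
    (φ : S → K)
    (hhom : ∀ x y : S, φ (x * y) = φ x * φ y)
    (hker : IsCompletelySimpleOn (fun a b : S => a * b) {x : S | φ x = 1}) :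
    IsCompletelySimpleOn (fun a b : S => a * b) (Set.univ : Set S) := by
  let f : S →ₙ* K := ⟨φ, hhom⟩
  obtain ⟨-, hsimple, e, he⟩ := hker
  exact ⟨fun _ _ _ _ => trivial, f.isSimpleOn_univ_of_ker hreg hsimple,
    e, f.isPrimitiveIdemOn_univ_of_ker he⟩

/-- If `S` is a regular semigroup with a group congruence (presented by a surjective
multiplicative map `φ` onto a group `K`) whose kernel `{x | φ x = 1}` is a completely
simple subsemigroup, then `S` itself is completely simple. -/
theorem stmt_9 {S K : Type*} [Semigroup S] [Group K]
    (hreg : ∀ x : S, ∃ x' : S, x * x' * x = x)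
    (φ : S → K) (hsurj : Function.Surjective φ)
    (hhom : ∀ x y : S, φ (x * y) = φ x * φ y)
    (hker : IsCompletelySimpleOn (fun a b : S => a * b) {x : S | φ x = 1}) :
    IsCompletelySimpleOn (fun a b : S => a * b) (Set.univ : Set S) :=
  stmt_9_general hreg φ hhom hker
end

section
/- (Kaloujnine–Krasner) Let G be a group with normal subgroup N and let H = G/N. Choose a transversal (r_A)_{A∈H} of the cosets of N in G with r_N = 1. Then the map κ : G → N^H ⋊ H = N ≀ H defined by g ↦ (f_g, gN), where f_g : H → N is given by A ↦ r_A g r_{A·gN}⁻¹, is an injective group homomorphism. -/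
/-- The wreath-product action of `A ∈ H` on a function `f : H → T`: `B(A·f) = (BA)f`. -/
def wAct {H T : Type*} [Mul H] (A : H) (f : H → T) : H → T :=
  fun B => f (B * A)

/-- The Kaloujnine–Krasner map `f_g : H → G`, `A ↦ r_A g r_{A·gN}⁻¹`, for a
transversal `r` of the cosets of `N` in `G`. -/
def kkMap {G : Type*} [Group G] (N : Subgroup G) [N.Normal]
    (r : G ⧸ N → G) (g : G) : G ⧸ N → G :=
  fun A => r A * g * (r (A * (g : G ⧸ N)))⁻¹
section KaloujnineKrasner

open QuotientGroup

variable {G : Type*} [Group G] {N : Subgroup G} [N.Normal] {r : G ⧸ N → G}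

theorem kkMap_apply_mem (hr : ∀ A : G ⧸ N, (r A : G ⧸ N) = A) (g : G) (A : G ⧸ N) :
    kkMap N r g A ∈ N := by
  rw [← eq_one_iff]
  simp only [kkMap, mk_mul, mk_inv, hr]
  group

theorem kkMap_mul (g h : G) :
    kkMap N r (g * h) = kkMap N r g * wAct (g : G ⧸ N) (kkMap N r h) := by
  funext A
  simp only [kkMap, wAct, Pi.mul_apply, mk_mul, mul_assoc, inv_mul_cancel_left]

theorem eq_of_kkMap_eq_of_mk_eq {g h : G} (hf : kkMap N r g = kkMap N r h)
    (hq : (g : G ⧸ N) = h) : g = h := by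
  have h1 := congrFun hf 1
  simp only [kkMap, hq] at h1
  exact mul_left_cancel (mul_right_cancel h1)

end KaloujnineKrasner

theorem stmt_11_general {G : Type*} [Group G] (N : Subgroup G) [N.Normal]
    (r : G ⧸ N → G) (hr : ∀ A : G ⧸ N, (r A : G ⧸ N) = A) :
    (∀ (g : G) (A : G ⧸ N), kkMap N r g A ∈ N) ∧
    Function.Injective (fun g : G => ((kkMap N r g, (g : G ⧸ N)) : (G ⧸ N → G) × (G ⧸ N))) ∧
    (∀ g h : G,
      ((kkMap N r (g * h), ((g * h : G) : G ⧸ N)) : (G ⧸ N → G) × (G ⧸ N)) =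
        sdMul wAct (kkMap N r g, (g : G ⧸ N)) (kkMap N r h, (h : G ⧸ N))) :=
  ⟨kkMap_apply_mem hr,
    fun _ _ hgh => eq_of_kkMap_eq_of_mk_eq (Prod.ext_iff.1 hgh).1 (Prod.ext_iff.1 hgh).2,
    fun g h => Prod.ext (kkMap_mul g h) (QuotientGroup.mk_mul N g h)⟩

/-- Kaloujnine–Krasner: for a group `G` with normal subgroup `N`, `H = G/N`, and a
transversal `(r_A)` with `r_N = 1`, the map `κ : g ↦ (f_g, gN)` into `N^H ⋊ H = N ≀ H`
is an injective group homomorphism.  (Here `f_g` takes values in `N`, as asserted.) -/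
theorem stmt_11 {G : Type*} [Group G] (N : Subgroup G) [N.Normal]
    (r : G ⧸ N → G) (hr : ∀ A : G ⧸ N, (r A : G ⧸ N) = A) (hr1 : r 1 = 1) :
    (∀ (g : G) (A : G ⧸ N), kkMap N r g A ∈ N) ∧
    Function.Injective (fun g : G => ((kkMap N r g, (g : G ⧸ N)) : (G ⧸ N → G) × (G ⧸ N))) ∧
    (∀ g h : G,
      ((kkMap N r (g * h), ((g * h : G) : G ⧸ N)) : (G ⧸ N → G) × (G ⧸ N)) =
        sdMul wAct (kkMap N r g, (g : G ⧸ N)) (kkMap N r h, (h : G ⧸ N))) :=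
  stmt_11_general N r hr
end

section
/- With the notation of the Kaloujnine–Krasner embedding: for all g, h ∈ G, the identity f_{gh} = f_g · (gN · f_h) holds in N^H, where gN · f_h denotes the wreath-product action of gN ∈ H on f_h ∈ N^H. -/
-- The product telescopes: `r_A g r_{AgN}⁻¹ · r_{AgN} h r_{AghN}⁻¹ = r_A gh r_{AghN}⁻¹`.
theorem stmt_12_general {G : Type*} [Group G] (N : Subgroup G) [N.Normal]
    (r : G ⧸ N → G)
    (g h : G) :
    kkMap N r (g * h) = kkMap N r g * wAct ((g : G ⧸ N)) (kkMap N r h) := by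
  funext A
  simp only [kkMap, wAct, Pi.mul_apply, QuotientGroup.mk_mul, mul_assoc]
  group

/-- With the notation of the Kaloujnine–Krasner embedding:
`f_{gh} = f_g · (gN · f_h)` in `N^H` (pointwise multiplication, wreath action). -/
theorem stmt_12 {G : Type*} [Group G] (N : Subgroup G) [N.Normal]
    (r : G ⧸ N → G) (hr : ∀ A : G ⧸ N, (r A : G ⧸ N) = A) (hr1 : r 1 = 1)
    (g h : G) :
    kkMap N r (g * h) = kkMap N r g * wAct ((g : G ⧸ N)) (kkMap N r h) :=
  stmt_12_general N r g h
end

section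
/- Let G = Z₇ ⋊ [2̄] be the nonabelian group of order 21, where [2̄] = {1̄, 2̄, 4̄} is the subgroup of the units of Z₇ generated by 2̄ acting on Z₇ by multiplication; let N = Z₇ × {1̄} ≅ Z₇, H = G/N ≅ [2̄]. Let S = M[G; {1,2}, {1,2}; P] with p₁₁ = p₁₂ = p₂₁ = (0̄,1̄) and p₂₂ = (1̄,1̄). Then S is a completely simple semigroup which is an extension of U = M[N; {1,2}, {1,2}; P] by H, but there is no injective semigroup homomorphism from S into the wreath product U ≀ H. -/
/-- Rees matrix multiplication on `I × G × Λ` with explicit multiplication on `G`. -/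
def reesMulM {G I L : Type*} (mulG : G → G → G) (P : L → I → G)
    (x y : I × G × L) : I × G × L :=
  (x.1, mulG (mulG x.2.1 (P x.2.2 y.1)) y.2.1, y.2.2)

/-- The unit `2̄` of `ZMod 7`. -/
def u2 : (ZMod 7)ˣ := ZMod.unitOfCoprime 2 (by decide)

/-- `[2̄] = {1̄, 2̄, 4̄}`, the subgroup of the units of `ZMod 7` generated by `2̄`. -/
def K : Subgroup (ZMod 7)ˣ := Subgroup.zpowers u2

/-- The nonabelian group `G = Z₇ ⋊ [2̄]` of order 21 (as a carrier set). -/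
abbrev G21 : Type := ZMod 7 × K

/-- Multiplication of `G = Z₇ ⋊ [2̄]`: `(a,k)(b,l) = (a + k·b, kl)`. -/
def gMul (x y : G21) : G21 :=
  (x.1 + ((x.2 : (ZMod 7)ˣ) : ZMod 7) * y.1, x.2 * y.2)

/-- The sandwich matrix `P` with `p₁₁ = p₁₂ = p₂₁ = (0̄,1̄)` and `p₂₂ = (1̄,1̄)`
(indices written `0,1`); all entries lie in `N = Z₇ × {1̄}`. -/
def P17 (l i : Fin 2) : G21 :=
  ((if l = 1 ∧ i = 1 then 1 else 0 : ZMod 7), 1)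

/-- `N = Z₇ × {1̄} ≅ Z₇`, the kernel of the second projection of `G`, as a carrier. -/
abbrev Ng : Type := {g : G21 // g.2 = 1}

/-- Multiplication of `N` induced from `G`. -/
def nMul (a b : Ng) : Ng :=
  ⟨gMul a.1 b.1, by
    show (a.1.2 * b.1.2 : K) = 1
    rw [a.2, b.2, mul_one]⟩

/-- The sandwich matrix `P` viewed as a matrix over `N`, so `U = M[N; I, Λ; P]`. -/
def PN (l i : Fin 2) : Ng := ⟨P17 l i, rfl⟩

/-- The carrier of `S = M[G; {1,2}, {1,2}; P]`. -/
abbrev S17 : Type := Fin 2 × G21 × Fin 2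

/-- The carrier of `U = M[N; {1,2}, {1,2}; P]`. -/
abbrev U17 : Type := Fin 2 × Ng × Fin 2


/-! An embedding `ψ : S → U ≀ H` gives idempotents trivial `H`-component, so evaluating the
`U^H`-component at each `C ∈ H` turns a relation `t (e' f' e') = (e f e)² t` with `e t = t = t e'`
(`e, f, e', f'` idempotent) into a relation of the same kind in `U`. In a Rees matrix semigroup
over an abelian group, `e f e` is the element of the maximal subgroup at `e` whose coordinate is
a cross ratio of the sandwich matrix, and such a relation says that the coordinate of `e' f' e'`
is the square of that of `e f e`. For `U` the cross ratios are `0, ±1 ∈ Z₇`, none of them twice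
a nonzero one, so `e f e = e`. In `S` instead `t = (0, (0, 2̄), 0)` relates
`e f e = (0, (-1, 1), 0) ≠ e` to its square, for `e = (0, (0, 1), 0)` and `f = (1, (-1, 1), 1)`,
because `2̄` acts on `Z₇` by doubling. -/

section ReesMatrix

variable {G I L : Type*}

theorem reesMulM_mul_self_eq_self_iff [Group G] (P : L → I → G) (x : I × G × L) :
    reesMulM (· * ·) P x x = x ↔ x.2.1 = (P x.2.2 x.1)⁻¹ := by
  obtain ⟨i, g, l⟩ := x
  simp only [reesMulM, Prod.mk.injEq, true_and, and_true, mul_eq_right, mul_eq_one_iff_eq_inv]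

theorem isSimpleSgr_reesMulM [Group G] (P : L → I → G) : IsSimpleSgr (reesMulM (· * ·) P) := by
  rintro J ⟨⟨a, ha⟩, hJ⟩
  refine Set.eq_univ_of_forall fun x => ?_
  have hx : reesMulM (· * ·) P
      (reesMulM (· * ·) P (x.1, x.2.1 * (P a.2.2 a.1 * a.2.1 * P a.2.2 a.1)⁻¹, a.2.2) a)
      (a.1, 1, x.2.2) = x := by
    simp [reesMulM, mul_assoc]
  rw [← hx]
  exact (hJ _ (hJ a ha _).2 _).1

theorem isPrimitiveIdem_reesMulM [Group G] (P : L → I → G) (i : I) (l : L) :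
    IsPrimitiveIdem (reesMulM (· * ·) P) (i, (P l i)⁻¹, l) := by
  refine ⟨(reesMulM_mul_self_eq_self_iff P _).2 rfl, ?_⟩
  rintro ⟨j, g, m⟩ hf hef hfe
  obtain rfl : i = j := congrArg Prod.fst hef
  obtain rfl : l = m := congrArg (·.2.2) hfe
  obtain rfl : g = (P l i)⁻¹ := (reesMulM_mul_self_eq_self_iff P _).1 hf
  rfl

theorem isCompletelySimple_reesMulM [Group G] [Nonempty I] [Nonempty L] (P : L → I → G) :
    IsCompletelySimple (reesMulM (· * ·) P) :=
  ⟨isSimpleSgr_reesMulM P, _,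
    isPrimitiveIdem_reesMulM P (Classical.arbitrary I) (Classical.arbitrary L)⟩

def crossRatio [Group G] (P : L → I → G) (i : I) (l : L) (j : I) (m : L) : G :=
  P l j * (P m j)⁻¹ * P m i * (P l i)⁻¹

theorem reesMulM_idem_sandwich [CommGroup G] (P : L → I → G) (i j : I) (l m : L) :
    reesMulM (· * ·) P (i, (P l i)⁻¹, l)
        (reesMulM (· * ·) P (j, (P m j)⁻¹, m) (i, (P l i)⁻¹, l)) =
      (i, crossRatio P i l j m * (P l i)⁻¹, l) := by
  simp only [reesMulM, crossRatio, Prod.mk.injEq, true_and, and_true]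
  simp only [mul_assoc, mul_comm, mul_left_comm]

end ReesMatrix

def IsSquareRigid {S : Type*} (mul : S → S → S) : Prop :=
  ∀ e f e' f' t : S, mul e e = e → mul f f = f → mul e' e' = e' → mul f' f' = f' →
    mul e t = t → mul t e' = t →
    mul t (mul e' (mul f' e')) = mul (mul e (mul f e)) (mul (mul e (mul f e)) t) →
    mul e (mul f e) = e

theorem isSquareRigid_reesMulM {G I L : Type*} [CommGroup G] (P : L → I → G)
    (hP : ∀ i l j m i' l' j' m',
      crossRatio P i' l' j' m' = crossRatio P i l j m ^ 2 → crossRatio P i l j m = 1) :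
    IsSquareRigid (reesMulM (· * ·) P) := by
  rintro ⟨i, a, l⟩ ⟨j, b, m⟩ ⟨i', a', l'⟩ ⟨j', b', m'⟩ ⟨ti, τ, tl⟩ hE hF hE' hF' hET hTE h
  obtain rfl : a = (P l i)⁻¹ := (reesMulM_mul_self_eq_self_iff P _).1 hE
  obtain rfl : b = (P m j)⁻¹ := (reesMulM_mul_self_eq_self_iff P _).1 hF
  obtain rfl : a' = (P l' i')⁻¹ := (reesMulM_mul_self_eq_self_iff P _).1 hE'
  obtain rfl : b' = (P m' j')⁻¹ := (reesMulM_mul_self_eq_self_iff P _).1 hF'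
  obtain rfl : i = ti := congrArg Prod.fst hET
  obtain rfl : l' = tl := congrArg (·.2.2) hTE
  rw [reesMulM_idem_sandwich, reesMulM_idem_sandwich] at h
  have hsq : crossRatio P i' l' j' m' = crossRatio P i l j m ^ 2 := by
    have h' := congrArg (·.2.1) h
    simp only [reesMulM, inv_mul_cancel_right] at h'
    refine mul_left_cancel (a := τ) ?_
    calc τ * crossRatio P i' l' j' m'
        = τ * P l' i' * (crossRatio P i' l' j' m' * (P l' i')⁻¹) := by
          rw [mul_comm (crossRatio P i' l' j' m'), ← mul_assoc, mul_inv_cancel_right]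
      _ = crossRatio P i l j m * (crossRatio P i l j m * τ) := h'
      _ = τ * crossRatio P i l j m ^ 2 := by rw [pow_two, mul_comm τ, mul_assoc]
  rw [reesMulM_idem_sandwich, hP _ _ _ _ _ _ _ _ hsq, one_mul]

def wreathMul {U H : Type*} [Mul H] (mulU : U → U → U) (x y : (H → U) × H) : (H → U) × H :=
  (fun C => mulU (x.1 C) (y.1 (C * x.2)), x.2 * y.2)

section WreathHom

variable {S U H : Type*} [Group H] {mulS : S → S → S} {mulU : U → U → U}
  {ψ : S → (H → U) × H}

theorem snd_eq_one_of_mul_self (hψ : ∀ x y, ψ (mulS x y) = wreathMul mulU (ψ x) (ψ y)) {x : S}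
    (hx : mulS x x = x) : (ψ x).2 = 1 := by
  have h := congrArg Prod.snd (hψ x x)
  rw [hx] at h
  exact left_eq_mul.mp h

theorem fst_mul_apply_of_snd_eq_one (hψ : ∀ x y, ψ (mulS x y) = wreathMul mulU (ψ x) (ψ y))
    {x : S} (hx : (ψ x).2 = 1) (y : S) (C : H) :
    (ψ (mulS x y)).1 C = mulU ((ψ x).1 C) ((ψ y).1 C) := by
  simp only [hψ, wreathMul, hx, mul_one]

theorem fst_apply_mul_self (hψ : ∀ x y, ψ (mulS x y) = wreathMul mulU (ψ x) (ψ y)) {x : S}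
    (hx : mulS x x = x) (C : H) : mulU ((ψ x).1 C) ((ψ x).1 C) = (ψ x).1 C := by
  rw [← fst_mul_apply_of_snd_eq_one hψ (snd_eq_one_of_mul_self hψ hx), hx]

theorem IsSquareRigid.of_injective_wreath (hU : IsSquareRigid mulU) (hinj : ψ.Injective)
    (hψ : ∀ x y, ψ (mulS x y) = wreathMul mulU (ψ x) (ψ y)) : IsSquareRigid mulS := by
  intro e f e' f' t he hf he' hf' het hte h
  have hsnd {x : S} (hx : mulS x x = x) : (ψ x).2 = 1 := snd_eq_one_of_mul_self hψ hx
  have hsandwich {x y : S} (hx : mulS x x = x) (hy : mulS y y = y) (C : H) :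
      (ψ (mulS x (mulS y x))).1 C = mulU ((ψ x).1 C) (mulU ((ψ y).1 C) ((ψ x).1 C)) := by
    rw [fst_mul_apply_of_snd_eq_one hψ (hsnd hx), fst_mul_apply_of_snd_eq_one hψ (hsnd hy)]
  have hz : (ψ (mulS e (mulS f e))).2 = 1 := by simp [hψ, wreathMul, hsnd he, hsnd hf]
  refine hinj (Prod.ext (funext fun C => ?_) (hz.trans (hsnd he).symm))
  set T := (ψ t).1
  set C' := C * (ψ t).2
  rw [hsandwich he hf]
  refine hU _ _ ((ψ e').1 C') ((ψ f').1 C') (T C) (fst_apply_mul_self hψ he C)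
    (fst_apply_mul_self hψ hf C) (fst_apply_mul_self hψ he' C') (fst_apply_mul_self hψ hf' C')
    ?_ ?_ ?_
  · rw [← fst_mul_apply_of_snd_eq_one hψ (hsnd he), het]
  · have := congrFun (congrArg Prod.fst (hψ t e')) C
    rwa [hte, eq_comm] at this
  · calc mulU (T C) (mulU ((ψ e').1 C') (mulU ((ψ f').1 C') ((ψ e').1 C')))
        = (ψ (mulS t (mulS e' (mulS f' e')))).1 C := by
          rw [hψ]
          exact congrArg (mulU (T C)) (hsandwich he' hf' C').symm
      _ = (ψ (mulS (mulS e (mulS f e)) (mulS (mulS e (mulS f e)) t))).1 C := by rw [h]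
      _ = _ := by
          rw [fst_mul_apply_of_snd_eq_one hψ hz, fst_mul_apply_of_snd_eq_one hψ hz,
            hsandwich he hf]

end WreathHom

theorem gMul_assoc (x y z : G21) : gMul (gMul x y) z = gMul x (gMul y z) := by
  simp only [gMul, Prod.mk.injEq, mul_assoc, and_true]
  push_cast
  ring

/-- Not an instance: `G21 = ZMod 7 × K` already carries the componentwise multiplication. -/
abbrev gGroup : Group G21 :=
  @Group.ofLeftAxioms G21 ⟨gMul⟩ ⟨fun g => (-(((g.2⁻¹ : K) : (ZMod 7)ˣ) : ZMod 7) * g.1, g.2⁻¹)⟩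
    ⟨(0, 1)⟩ gMul_assoc (fun g => show gMul (0, 1) g = g by simp [gMul])
    (fun g => show gMul (_, _) g = (0, 1) by simp [gMul])

theorem nMul_mk (a b : ZMod 7) : nMul ⟨(a, 1), rfl⟩ ⟨(b, 1), rfl⟩ = ⟨(a + b, 1), rfl⟩ := by
  simp [nMul, gMul]

theorem Ng.eta (a : Ng) : a = ⟨(a.1.1, 1), rfl⟩ := by
  obtain ⟨⟨a, k⟩, rfl : k = 1⟩ := a
  rfl

instance : CommGroup Ng where
  mul := nMul
  one := ⟨(0, 1), rfl⟩
  inv a := ⟨(-a.1.1, 1), rfl⟩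
  mul_assoc a b c := by
    rw [Ng.eta a, Ng.eta b, Ng.eta c]
    show nMul (nMul _ _) _ = nMul _ (nMul _ _)
    simp only [nMul_mk, add_assoc]
  one_mul a := by
    rw [Ng.eta a]
    show nMul ⟨(0, 1), rfl⟩ _ = _
    simp only [nMul_mk, zero_add]
  mul_one a := by
    rw [Ng.eta a]
    show nMul _ ⟨(0, 1), rfl⟩ = _
    simp only [nMul_mk, add_zero]
  inv_mul_cancel a := by
    rw [Ng.eta a]
    show nMul ⟨(-a.1.1, 1), rfl⟩ _ = ⟨(0, 1), rfl⟩
    simp only [nMul_mk, neg_add_cancel]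
  mul_comm a b := by
    rw [Ng.eta a, Ng.eta b]
    show nMul _ _ = nMul _ _
    simp only [nMul_mk, add_comm]

theorem isSquareRigid_U17 : IsSquareRigid (reesMulM nMul PN) :=
  isSquareRigid_reesMulM PN (by decide)

theorem not_isSquareRigid_S17 : ¬ IsSquareRigid (reesMulM gMul P17) := by
  intro h
  have := h (0, (0, 1), 0) (1, (-1, 1), 1) (0, (0, 1), 0) (1, (-1, 1), 1)
    (0, (0, ⟨u2, Subgroup.mem_zpowers u2⟩), 0)
  exact absurd (this (by decide) (by decide) (by decide) (by decide) (by decide) (by decide)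
    (by decide)) (by decide)

theorem extension_of_U17_by_K :
    Function.Surjective (fun x : S17 => (x.2.1.2 : K)) ∧
      (∀ x y : S17, (reesMulM gMul P17 x y).2.1.2 = x.2.1.2 * y.2.1.2) ∧
      Function.Injective (fun u : U17 => ((u.1, u.2.1.1, u.2.2) : S17)) ∧
      (∀ u v : U17,
        ((reesMulM nMul PN u v).1, (reesMulM nMul PN u v).2.1.1,
          (reesMulM nMul PN u v).2.2) =
        reesMulM gMul P17 (u.1, u.2.1.1, u.2.2) (v.1, v.2.1.1, v.2.2)) ∧
      Set.range (fun u : U17 => ((u.1, u.2.1.1, u.2.2) : S17)) =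
        {x : S17 | x.2.1.2 = 1} := by
  refine ⟨fun k => ⟨(0, (0, k), 0), rfl⟩, fun x y => ?_, fun u v h => ?_, fun u v => rfl, ?_⟩
  · show x.2.1.2 * 1 * y.2.1.2 = x.2.1.2 * y.2.1.2
    rw [mul_one]
  · simp only [Prod.mk.injEq] at h
    exact Prod.ext h.1 (Prod.ext (Subtype.ext h.2.1) h.2.2)
  · ext x
    refine ⟨?_, fun hx => ⟨(x.1, ⟨x.2.1, hx⟩, x.2.2), rfl⟩⟩
    rintro ⟨u, rfl⟩
    exact u.2.1.2

/-- `S = M[G;{1,2},{1,2};P]`, with `G = Z₇ ⋊ [2̄]` of order 21, `N = Z₇ × {1̄}`,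
`H = G/N ≅ [2̄]`, `p₁₁ = p₁₂ = p₂₁ = (0̄,1̄)`, `p₂₂ = (1̄,1̄)`, is a completely simple
semigroup; it is an extension of `U = M[N;{1,2},{1,2};P]` by `H` (the second projection
`φ` onto `H = [2̄]` is a surjective homomorphism whose kernel is a copy of `U`); yet
there is no injective semigroup homomorphism of `S` into the wreath product
`U ≀ H = U^H ⋊ H`. -/
theorem stmt_17 :
    IsCompletelySimple (reesMulM gMul P17) ∧
    (Function.Surjective (fun x : S17 => (x.2.1.2 : K)) ∧
      (∀ x y : S17, (reesMulM gMul P17 x y).2.1.2 = x.2.1.2 * y.2.1.2) ∧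
      Function.Injective (fun u : U17 => ((u.1, u.2.1.1, u.2.2) : S17)) ∧
      (∀ u v : U17,
        ((reesMulM nMul PN u v).1, (reesMulM nMul PN u v).2.1.1,
          (reesMulM nMul PN u v).2.2) =
        reesMulM gMul P17 (u.1, u.2.1.1, u.2.2) (v.1, v.2.1.1, v.2.2)) ∧
      Set.range (fun u : U17 => ((u.1, u.2.1.1, u.2.2) : S17)) =
        {x : S17 | x.2.1.2 = 1}) ∧
    ¬ ∃ ψ : S17 → (K → U17) × K, Function.Injective ψ ∧
        ∀ x y : S17, ψ (reesMulM gMul P17 x y) =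
          ((fun C => reesMulM nMul PN ((ψ x).1 C) ((ψ y).1 (C * (ψ x).2))),
            (ψ x).2 * (ψ y).2) :=
  ⟨@isCompletelySimple_reesMulM _ _ _ gGroup _ _ P17, extension_of_U17_by_K,
    fun ⟨_, hinj, hψ⟩ => not_isSquareRigid_S17 (isSquareRigid_U17.of_injective_wreath hinj hψ)⟩
end
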